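/- Let S be a partial plane spread in PG(6,2) of the maximum size #S = 17. Then every hyperplane of V = F₂⁷ contains at least 1 and at most 3 blocks of S, and the spectrum of S is (1^7 2^112 3^8): exactly 7 hyperplanes contain exactly one block, exactly 112 hyperplanes contain exactly two blocks, and exactly 8 hyperplanes contain exactly three blocks. -/

import Mathlib

open Module

abbrev V2 : Type := Fin 7 → ZMod 2

/-- A partial plane spread in PG(6,2): a set of 3-dimensional subspaces of `V2 = F₂⁷`
(the blocks) any two distinct members of which intersect trivially. -/
def IsPPS (S : Set (Submodule (ZMod 2) V2)) : Prop :=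
  (∀ B ∈ S, finrank (ZMod 2) ↥B = 3) ∧
    ∀ B₁ ∈ S, ∀ B₂ ∈ S, B₁ ≠ B₂ → B₁ ⊓ B₂ = ⊥

/-- A point (1-dimensional subspace) of `V2` is a hole of `S` if it is contained
in no block of `S`. -/
def IsHole (S : Set (Submodule (ZMod 2) V2)) (P : Submodule (ZMod 2) V2) : Prop :=
  finrank (ZMod 2) ↥P = 1 ∧ ∀ B ∈ S, ¬ P ≤ B

/-- The number of holes of `S` contained in the subspace `X`. -/
noncomputable def holeCount (S : Set (Submodule (ZMod 2) V2))
    (X : Submodule (ZMod 2) V2) : ℕ :=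
  {P | IsHole S P ∧ P ≤ X}.ncard

/-- The span `⟨N⟩` of the set of holes of `S`. -/
noncomputable def holeSpan (S : Set (Submodule (ZMod 2) V2)) : Submodule (ZMod 2) V2 :=
  sSup {P | IsHole S P}

/-- The number of blocks of `S` contained in the subspace `H`. -/
noncomputable def blocksIn (S : Set (Submodule (ZMod 2) V2))
    (H : Submodule (ZMod 2) V2) : ℕ :=
  {B ∈ S | B ≤ H}.ncard

/-- `spec S i` = the number of hyperplanes of `V2` containing exactly `i` blocks of `S`. -/
noncomputable def spec (S : Set (Submodule (ZMod 2) V2)) (i : ℕ) : ℕ :=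
  {H : Submodule (ZMod 2) V2 | finrank (ZMod 2) ↥H = 6 ∧ blocksIn S H = i}.ncard

/-!
The 17 blocks cover 17 · 7 = 119 of the 127 nonzero vectors of F₂⁷, leaving 8 hole vectors.
A hyperplane `H` meets every block not contained in it in a line, so counting the 63 nonzero
vectors of `H` gives `63 = 7 b + 3 (17 - b) + h`, where `b` is the number of blocks in `H` and
`0 ≤ h ≤ 8` the number of holes in `H`; hence `4 b + h = 12` and `1 ≤ b ≤ 3`.
Each plane lies in 15 hyperplanes and two disjoint planes span a 6-space, which lies in exactly
one hyperplane, so double counting gives `∑ b = 17 · 15` and `∑ b (b - 1) = 17 · 16` over the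
127 hyperplanes. These three linear equations determine the spectrum.
-/

open Finset

theorem Finset.sum_comp_eq_sum_card_filter_nsmul {α β γ : Type*} [DecidableEq β]
    [AddCommMonoid γ] {s : Finset α} {t : Finset β} {g : α → β} (h : ∀ a ∈ s, g a ∈ t)
    (f : β → γ) : ∑ a ∈ s, f (g a) = ∑ b ∈ t, #{a ∈ s | g a = b} • f b := by
  simp only [← sum_fiberwise_of_maps_to' h, sum_const]

section Counting

variable {M : Type*} [AddCommGroup M] [Module (ZMod 2) M] [Module.Finite (ZMod 2) M]

instance : Finite M := Module.finite_of_finite (ZMod 2)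

theorem Submodule.ncard_diff_zero (X : Submodule (ZMod 2) M) :
    ((X : Set M) \ {0}).ncard = 2 ^ finrank (ZMod 2) X - 1 := by
  rw [Set.ncard_sdiff (by simp), Set.ncard_singleton, ← Nat.card_coe_set_eq,
    SetLike.coe_sort_coe, Module.natCard_eq_pow_finrank (K := ZMod 2), Nat.card_zmod]

def holeVectors (S : Set (Submodule (ZMod 2) M)) : Set M :=
  {v | v ≠ 0 ∧ ∀ B ∈ S, v ∉ B}

theorem sum_add_ncard_inter_holeVectors (T : Finset (Submodule (ZMod 2) M))
    (hT : (T : Set (Submodule (ZMod 2) M)).PairwiseDisjoint id) (X : Submodule (ZMod 2) M) :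
    ∑ B ∈ T, (2 ^ finrank (ZMod 2) ↥(B ⊓ X) - 1) + ((X : Set M) ∩ holeVectors ↑T).ncard
      = 2 ^ finrank (ZMod 2) X - 1 := by
  have hsplit : (X : Set M) \ {0}
      = (⋃ B ∈ (T : Set _), ((B ⊓ X : Submodule (ZMod 2) M) : Set M) \ {0})
        ∪ ((X : Set M) ∩ holeVectors ↑T) := by
    ext v
    simp only [holeVectors, Set.mem_union, Set.mem_iUnion, Set.mem_sdiff, Set.mem_inter_iff,
      Set.mem_ofPred_eq, SetLike.mem_coe, Submodule.mem_inf, Set.mem_singleton_iff, exists_prop]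
    by_cases h : ∃ B ∈ T, v ∈ B
    · aesop
    · push Not at h; tauto
  have hdisj : (T : Set (Submodule (ZMod 2) M)).PairwiseDisjoint
      fun B => ((B ⊓ X : Submodule (ZMod 2) M) : Set M) \ {0} := by
    intro B₁ h₁ B₂ h₂ hne
    rw [Function.onFun, Set.disjoint_left]
    rintro v ⟨hv₁, hv0⟩ ⟨hv₂, -⟩
    exact hv0 (Submodule.disjoint_def.mp (hT h₁ h₂ hne) v
      (Submodule.mem_inf.mp hv₁).1 (Submodule.mem_inf.mp hv₂).1)
  have hcover : Disjoint (⋃ B ∈ (T : Set _), ((B ⊓ X : Submodule (ZMod 2) M) : Set M) \ {0})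
      ((X : Set M) ∩ holeVectors ↑T) := by
    rw [Set.disjoint_left]
    simp only [Set.mem_iUnion, holeVectors]
    rintro v ⟨B, hB, hvB, -⟩ ⟨-, -, hv⟩
    exact hv B hB (Submodule.mem_inf.mp hvB).1
  rw [← Submodule.ncard_diff_zero, hsplit, Set.ncard_union_eq hcover,
    (Set.toFinite _).ncard_biUnion (fun _ _ => Set.toFinite _) hdisj, finsum_mem_coe_finset]
  simp only [Submodule.ncard_diff_zero]

end Counting

section Hyperplanes

theorem Submodule.finrank_inf_add_one_of_not_le {K M : Type*} [DivisionRing K] [AddCommGroup M]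
    [Module K M] [FiniteDimensional K M] {B H : Submodule K M}
    (hH : finrank K H + 1 = finrank K M) (hB : ¬ B ≤ H) :
    finrank K ↥(B ⊓ H) + 1 = finrank K B := by
  have hlt : finrank K H < finrank K ↥(B ⊔ H) :=
    Submodule.finrank_lt_finrank_of_lt (lt_of_le_of_ne le_sup_right fun h => hB (h ▸ le_sup_left))
  have hle : finrank K ↥(B ⊔ H) ≤ finrank K M := Submodule.finrank_le _
  have := Submodule.finrank_sup_add_finrank_inf_eq B H
  rw [inf_comm] at this ⊢
  omega

variable {M : Type*} [AddCommGroup M] [Module (ZMod 2) M]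

theorem Module.Dual.ker_injective_zmod_two :
    Function.Injective (LinearMap.ker : Module.Dual (ZMod 2) M → Submodule (ZMod 2) M) := by
  intro f g h
  ext v
  by_cases hv : v ∈ LinearMap.ker f
  · rw [LinearMap.mem_ker.mp hv, LinearMap.mem_ker.mp (h ▸ hv)]
  · have hv' : v ∉ LinearMap.ker g := h ▸ hv
    rw [LinearMap.mem_ker] at hv hv'
    -- the only nonzero element of `ZMod 2` is `1`
    revert hv hv'
    generalize f v = a; generalize g v = b
    revert a b; decide

variable [Module.Finite (ZMod 2) M]

theorem exists_dual_ker_eq_of_finrank_add_one {H : Submodule (ZMod 2) M}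
    (hH : finrank (ZMod 2) H + 1 = finrank (ZMod 2) M) :
    ∃ f : Module.Dual (ZMod 2) M, f ≠ 0 ∧ LinearMap.ker f = H := by
  have hlt : H < ⊤ := lt_top_iff_ne_top.mpr fun h => by
    rw [h, finrank_top] at hH; omega
  obtain ⟨f, hf, hHf⟩ := H.exists_dual_map_eq_bot_of_lt_top hlt inferInstance
  refine ⟨f, hf, (Submodule.eq_of_le_of_finrank_eq (LinearMap.le_ker_iff_map.mpr hHf) ?_).symm⟩
  have := Module.Dual.finrank_ker_add_one_of_ne_zero hf
  omega

theorem ncard_hyperplanes_ge (W : Submodule (ZMod 2) M) :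
    {H : Submodule (ZMod 2) M | finrank (ZMod 2) H + 1 = finrank (ZMod 2) M ∧ W ≤ H}.ncard
      = 2 ^ (finrank (ZMod 2) M - finrank (ZMod 2) W) - 1 := by
  have himage : {H : Submodule (ZMod 2) M | finrank (ZMod 2) H + 1 = finrank (ZMod 2) M ∧ W ≤ H}
      = LinearMap.ker '' ((W.dualAnnihilator : Set (Module.Dual (ZMod 2) M)) \ {0}) := by
    ext H
    constructor
    · rintro ⟨hH, hWH⟩
      obtain ⟨f, hf, rfl⟩ := exists_dual_ker_eq_of_finrank_add_one hH
      exact ⟨f, ⟨(Submodule.mem_dualAnnihilator f).mpr fun w hw => hWH hw, hf⟩, rfl⟩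
    · rintro ⟨f, ⟨hfW, hf⟩, rfl⟩
      exact ⟨Module.Dual.finrank_ker_add_one_of_ne_zero hf,
        fun w hw => (Submodule.mem_dualAnnihilator f).mp hfW w hw⟩
  rw [himage, Set.ncard_image_of_injective _ Module.Dual.ker_injective_zmod_two,
    Submodule.ncard_diff_zero, ← Subspace.finrank_add_finrank_dualAnnihilator_eq W,
    Nat.add_sub_cancel_left]

end Hyperplanes

section DoubleCounting

open Classical

variable {M : Type*} [AddCommGroup M] [Module (ZMod 2) M] [Module.Finite (ZMod 2) M]

instance : Finite (Submodule (ZMod 2) M) :=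
  Finite.of_injective (fun X => (X : Set M)) SetLike.coe_injective

variable (M) in
noncomputable def hyperplanes : Finset (Submodule (ZMod 2) M) :=
  (Set.toFinite {H : Submodule (ZMod 2) M | finrank (ZMod 2) H + 1 = finrank (ZMod 2) M}).toFinset

theorem mem_hyperplanes {H : Submodule (ZMod 2) M} :
    H ∈ hyperplanes M ↔ finrank (ZMod 2) H + 1 = finrank (ZMod 2) M :=
  Set.Finite.mem_toFinset _

theorem card_hyperplanes_ge (W : Submodule (ZMod 2) M) :
    #{H ∈ hyperplanes M | W ≤ H} = 2 ^ (finrank (ZMod 2) M - finrank (ZMod 2) W) - 1 := by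
  rw [← ncard_hyperplanes_ge, ← Set.ncard_coe_finset]
  congr
  ext H
  simp [mem_hyperplanes]

theorem sum_card_filter_le_hyperplanes (T : Finset (Submodule (ZMod 2) M)) :
    ∑ H ∈ hyperplanes M, #{B ∈ T | B ≤ H}
      = ∑ B ∈ T, (2 ^ (finrank (ZMod 2) M - finrank (ZMod 2) B) - 1) := by
  rw [← Finset.sum_congr rfl fun B _ => card_hyperplanes_ge B]
  exact sum_card_bipartiteAbove_eq_sum_card_bipartiteBelow _

theorem sum_card_filter_le_hyperplanes_mul_pred (T : Finset (Submodule (ZMod 2) M)) :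
    ∑ H ∈ hyperplanes M, #{B ∈ T | B ≤ H} * (#{B ∈ T | B ≤ H} - 1)
      = ∑ p ∈ T.offDiag,
          (2 ^ (finrank (ZMod 2) M - finrank (ZMod 2) ↥(p.1 ⊔ p.2)) - 1) := by
  have hpairs : ∀ H, #{B ∈ T | B ≤ H} * (#{B ∈ T | B ≤ H} - 1)
      = #{p ∈ T.offDiag | p.1 ⊔ p.2 ≤ H} := by
    intro H
    rw [Nat.mul_sub_one, ← offDiag_card]
    congr 1
    ext p
    simp only [mem_offDiag, mem_filter, sup_le_iff]
    tauto
  rw [Finset.sum_congr rfl fun H _ => hpairs H,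
    ← Finset.sum_congr rfl fun p _ => card_hyperplanes_ge (Prod.fst p ⊔ Prod.snd p)]
  exact sum_card_bipartiteAbove_eq_sum_card_bipartiteBelow _

end DoubleCounting

section MaximalSpread

open Classical

variable {T : Finset (Submodule (ZMod 2) V2)} (hdim : ∀ B ∈ T, finrank (ZMod 2) B = 3)
  (hdisj : (T : Set (Submodule (ZMod 2) V2)).PairwiseDisjoint id) (hcard : #T = 17)

theorem finrank_V2 : finrank (ZMod 2) V2 = 7 := Module.finrank_fin_fun _

theorem mem_hyperplanes_V2 {H : Submodule (ZMod 2) V2} :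
    H ∈ hyperplanes V2 ↔ finrank (ZMod 2) H = 6 := by
  rw [mem_hyperplanes, finrank_V2]
  omega

theorem card_hyperplanes_V2 : #(hyperplanes V2) = 127 := by
  simpa [finrank_V2] using card_hyperplanes_ge (⊥ : Submodule (ZMod 2) V2)

theorem blocksIn_coe (H : Submodule (ZMod 2) V2) : blocksIn ↑T H = #{B ∈ T | B ≤ H} := by
  rw [blocksIn, ← Set.ncard_coe_finset]
  congr
  ext B
  simp

theorem spec_coe (i : ℕ) : spec ↑T i = #{H ∈ hyperplanes V2 | #{B ∈ T | B ≤ H} = i} := by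
  rw [spec, ← Set.ncard_coe_finset]
  congr
  ext H
  simp [mem_hyperplanes_V2, blocksIn_coe]

include hdim hcard

theorem sum_card_filter_le_hyperplanes_eq :
    ∑ H ∈ hyperplanes V2, #{B ∈ T | B ≤ H} = 255 := by
  have hB : ∀ B ∈ T, 2 ^ (finrank (ZMod 2) V2 - finrank (ZMod 2) B) - 1 = 15 := fun B hB => by
    rw [finrank_V2, hdim B hB]; rfl
  rw [sum_card_filter_le_hyperplanes, sum_congr rfl hB, sum_const, hcard, smul_eq_mul]

include hdisj

theorem sum_card_filter_le_hyperplanes_mul_pred_eq :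
    ∑ H ∈ hyperplanes V2, #{B ∈ T | B ≤ H} * (#{B ∈ T | B ≤ H} - 1) = 272 := by
  have hpair : ∀ p ∈ T.offDiag,
      2 ^ (finrank (ZMod 2) V2 - finrank (ZMod 2) ↥(p.1 ⊔ p.2)) - 1 = 1 := by
    rintro ⟨B₁, B₂⟩ hp
    obtain ⟨h₁, h₂, hne⟩ := mem_offDiag.mp hp
    have hbot : B₁ ⊓ B₂ = ⊥ := (hdisj h₁ h₂ hne).eq_bot
    have := Submodule.finrank_sup_add_finrank_inf_eq B₁ B₂
    rw [hbot, finrank_bot, hdim B₁ h₁, hdim B₂ h₂] at this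
    show 2 ^ (finrank (ZMod 2) V2 - finrank (ZMod 2) ↥(B₁ ⊔ B₂)) - 1 = 1
    rw [finrank_V2, show finrank (ZMod 2) ↥(B₁ ⊔ B₂) = 6 by omega]; rfl
  rw [sum_card_filter_le_hyperplanes_mul_pred, sum_congr rfl hpair, sum_const, offDiag_card, hcard,
    smul_eq_mul]

theorem ncard_holeVectors_eq_eight : (holeVectors (T : Set (Submodule (ZMod 2) V2))).ncard = 8 := by
  have h := sum_add_ncard_inter_holeVectors T hdisj ⊤
  have hblock : ∀ B ∈ T, 2 ^ finrank (ZMod 2) ↥(B ⊓ ⊤) - 1 = 7 := fun B hB => by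
    rw [inf_top_eq, hdim B hB]; rfl
  rw [sum_congr rfl hblock, sum_const, hcard, smul_eq_mul, Submodule.top_coe, Set.univ_inter,
    finrank_top, finrank_V2] at h
  omega

theorem four_mul_card_add_ncard_holeVectors {H : Submodule (ZMod 2) V2}
    (hH : finrank (ZMod 2) H = 6) :
    4 * #{B ∈ T | B ≤ H} + ((H : Set V2) ∩ holeVectors ↑T).ncard = 12 := by
  have hmeet : ∀ B ∈ T, 2 ^ finrank (ZMod 2) ↥(B ⊓ H) - 1 = if B ≤ H then 7 else 3 := by
    intro B hB
    split_ifs with hBH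
    · rw [inf_eq_left.mpr hBH, hdim B hB]; rfl
    · have := Submodule.finrank_inf_add_one_of_not_le (by rw [hH, finrank_V2]) hBH
      rw [hdim B hB] at this
      rw [show finrank (ZMod 2) ↥(B ⊓ H) = 2 by omega]; rfl
  have h := sum_add_ncard_inter_holeVectors T hdisj H
  rw [sum_congr rfl hmeet, sum_ite, sum_const, sum_const, hH, smul_eq_mul, smul_eq_mul] at h
  have hsplit := card_filter_add_card_filter_not (s := T) (fun B => B ≤ H)
  omega

theorem card_filter_le_hyperplane_mem_Icc {H : Submodule (ZMod 2) V2}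
    (hH : finrank (ZMod 2) H = 6) : #{B ∈ T | B ≤ H} ∈ Icc 1 3 := by
  have h := four_mul_card_add_ncard_holeVectors hdim hdisj hcard hH
  have hholes : ((H : Set V2) ∩ holeVectors ↑T).ncard ≤ 8 :=
    ncard_holeVectors_eq_eight hdim hdisj hcard ▸ Set.ncard_le_ncard Set.inter_subset_right
  rw [mem_Icc]
  omega

end MaximalSpread

theorem spectrum_of_max_pps (S : Set (Submodule (ZMod 2) V2)) (hS : IsPPS S)
    (h17 : S.ncard = 17) :
    (∀ H : Submodule (ZMod 2) V2, finrank (ZMod 2) ↥H = 6 →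
      1 ≤ blocksIn S H ∧ blocksIn S H ≤ 3) ∧
    spec S 1 = 7 ∧ spec S 2 = 112 ∧ spec S 3 = 8 := by
  classical
  obtain ⟨T, rfl⟩ := S.toFinite.exists_finset_coe
  obtain ⟨hdim, hinter⟩ := hS
  rw [Set.ncard_coe_finset] at h17
  have hdisj : (T : Set (Submodule (ZMod 2) V2)).PairwiseDisjoint id :=
    fun B₁ h₁ B₂ h₂ hne => disjoint_iff.mpr (hinter B₁ h₁ B₂ h₂ hne)
  have hrange : ∀ H ∈ hyperplanes V2, #{B ∈ T | B ≤ H} ∈ ({1, 2, 3} : Finset ℕ) :=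
    fun H hH =>
      (show Icc 1 3 = ({1, 2, 3} : Finset ℕ) from rfl) ▸
        card_filter_le_hyperplane_mem_Icc hdim hdisj h17 (mem_hyperplanes_V2.mp hH)
  refine ⟨fun H hH => ?_, ?_⟩
  · simpa [blocksIn_coe] using card_filter_le_hyperplane_mem_Icc hdim hdisj h17 hH
  have hcount := card_hyperplanes_V2
  have hsum := sum_card_filter_le_hyperplanes_eq hdim h17
  have hpairs := sum_card_filter_le_hyperplanes_mul_pred_eq hdim hdisj h17
  rw [card_eq_sum_ones, sum_comp_eq_sum_card_filter_nsmul hrange (fun _ => 1)] at hcount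
  rw [sum_comp_eq_sum_card_filter_nsmul hrange (fun j => j)] at hsum
  rw [sum_comp_eq_sum_card_filter_nsmul hrange (fun j => j * (j - 1))] at hpairs
  simp only [sum_insert, sum_singleton, mem_insert, mem_singleton, OfNat.one_ne_ofNat,
    Nat.reduceEqDiff, or_self, not_false_eq_true, smul_eq_mul] at hcount hsum hpairs
  simp only [spec_coe]
  omega
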